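/- arXiv:2402.10210 — 2 statements merged into one kernel-verified Lean document; each statement's English description precedes it below -/
import Mathlib

section
/- In the DDIM forward process with q(x_{t-1} | x_t, x₀) = N(√(α_{t-1}) x₀ + √(1 − α_{t-1} − σ_t²)(x_t − √(α_t) x₀)/√(1 − α_t), σ_t² I) and q(x_T | x₀) = N(√(α_T) x₀, (1 − α_T) I), it holds by backward induction that the marginal q(x_t | x₀) = N(√(α_t) x₀, (1 − α_t) I) for every t ∈ {1,…,T}. -/
open MeasureTheory ProbabilityTheory

/-- Isotropic Gaussian measure on `ℝ^d` (as `Fin d → ℝ`) with mean vector `m`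
and covariance `v • I`, built as a product of one-dimensional Gaussians. -/
noncomputable def isoGaussian (d : ℕ) (m : Fin d → ℝ) (v : NNReal) :
    Measure (Fin d → ℝ) :=
  Measure.pi fun i => gaussianReal (m i) v

/-
Each reverse step is an affine Gaussian kernel: `x_{t-1} = a x_t + b + σ_t ε` with
`a = √(1 - α_{t-1} - σ_t²) / √(1 - α_t)`. Hence, if `x_t ~ N(√α_t x₀, (1 - α_t) I)`, the law of
`x_{t-1}` is the convolution of an affine image of that Gaussian with `N(0, σ_t² I)`, a Gaussian
with mean `√α_{t-1} x₀` and variance `a² (1 - α_t) + σ_t² = 1 - α_{t-1}`. Isotropic Gaussians are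
products of one-dimensional ones and convolution commutes with products, so everything reduces to
the one-dimensional facts; backward induction from `t = T` finishes the proof.
-/

open scoped NNReal

namespace MeasureTheory.Measure

variable {X M : Type*} [MeasurableSpace X] [AddMonoid M] [MeasurableSpace M] [MeasurableAdd₂ M]

theorem bind_map_const_add_eq_conv (μ : Measure X) (ν : Measure M) [SFinite ν] {f : X → M}
    (hf : Measurable f) :
    μ.bind (fun x => ν.map (f x + ·)) = μ.map f ∗ ν := by
  have hker : Measurable fun x => ν.map (f x + ·) := by
    refine measurable_of_measurable_coe _ fun s hs => ?_
    simp_rw [map_apply (measurable_const_add _) hs]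
    exact (measurable_measure_prodMk_left (measurable_add hs)).comp hf
  ext s hs
  have hs' : MeasurableSet ((fun p : M × M => p.1 + p.2) ⁻¹' s) := measurable_add hs
  rw [bind_apply hs hker.aemeasurable, conv, map_apply measurable_add hs, prod_apply hs',
    lintegral_map (measurable_measure_prodMk_left hs') hf]
  exact lintegral_congr fun x => map_apply (measurable_const_add _) hs

theorem pi_conv_pi {ι : Type*} [Fintype ι] (μ ν : ι → Measure M) [∀ i, IsFiniteMeasure (μ i)]
    [∀ i, IsFiniteMeasure (ν i)] :
    Measure.pi μ ∗ Measure.pi ν = Measure.pi fun i => μ i ∗ ν i := by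
  rw [conv, ← (measurePreserving_arrowProdEquivProdArrow M M ι μ ν).map_eq,
    map_map measurable_add (MeasurableEquiv.measurable _)]
  exact pi_map_pi fun i => measurable_add.aemeasurable

end MeasureTheory.Measure

open Measure

theorem gaussianReal_map_affine (m : ℝ) (v : ℝ≥0) (a b : ℝ) :
    (gaussianReal m v).map (fun x => a * x + b)
      = gaussianReal (a * m + b) (.mk (a ^ 2) (sq_nonneg a) * v) := by
  rw [← gaussianReal_map_add_const, ← gaussianReal_map_const_mul,
    map_map (measurable_add_const b) (measurable_const_mul a)]
  rfl

instance instIsProbabilityMeasureIsoGaussian (d : ℕ) (m : Fin d → ℝ) (v : ℝ≥0) :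
    IsProbabilityMeasure (isoGaussian d m v) :=
  inferInstanceAs (IsProbabilityMeasure (Measure.pi _))

theorem isoGaussian_map_affine (d : ℕ) (m : Fin d → ℝ) (v : ℝ≥0) (a : ℝ) (b : Fin d → ℝ) :
    (isoGaussian d m v).map (fun x => a • x + b)
      = isoGaussian d (a • m + b) (.mk (a ^ 2) (sq_nonneg a) * v) := by
  unfold isoGaussian
  change map (fun (x : Fin d → ℝ) i => a * x i + b i) _ = _
  rw [pi_map_pi (f := fun i y => a * y + b i) fun i => by fun_prop]
  simp_rw [gaussianReal_map_affine]
  rfl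

theorem isoGaussian_eq_map_const_add (d : ℕ) (c : Fin d → ℝ) (v : ℝ≥0) :
    isoGaussian d c v = (isoGaussian d 0 v).map (c + ·) := by
  unfold isoGaussian
  change _ = map (fun (x : Fin d → ℝ) i => c i + x i) _
  rw [pi_map_pi (f := fun i y => c i + y) fun i => by fun_prop]
  simp_rw [gaussianReal_map_const_add, Pi.zero_apply, zero_add]

theorem isoGaussian_conv_isoGaussian (d : ℕ) (m₁ m₂ : Fin d → ℝ) (v₁ v₂ : ℝ≥0) :
    isoGaussian d m₁ v₁ ∗ isoGaussian d m₂ v₂ = isoGaussian d (m₁ + m₂) (v₁ + v₂) := by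
  unfold isoGaussian
  rw [pi_conv_pi]
  simp_rw [gaussianReal_conv_gaussianReal]
  rfl

theorem isoGaussian_bind_affine (d : ℕ) (m : Fin d → ℝ) (v τ : ℝ≥0) (a : ℝ) (b : Fin d → ℝ) :
    (isoGaussian d m v).bind (fun x => isoGaussian d (a • x + b) τ)
      = isoGaussian d (a • m + b) (.mk (a ^ 2) (sq_nonneg a) * v + τ) := by
  have hker : (fun x => isoGaussian d (a • x + b) τ)
      = fun x => (isoGaussian d 0 τ).map ((a • x + b) + ·) :=
    funext fun x => isoGaussian_eq_map_const_add d _ τ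
  rw [hker, bind_map_const_add_eq_conv _ _ (by fun_prop), isoGaussian_map_affine,
    isoGaussian_conv_isoGaussian, add_zero]

open Real in
theorem isoGaussian_bind_ddimPosterior (d : ℕ) (x₀ : Fin d → ℝ) {α α' σ : ℝ} (hα : α < 1)
    (hσ : σ ^ 2 ≤ 1 - α') :
    (isoGaussian d (fun i => √α * x₀ i) (1 - α).toNNReal).bind (fun xt => isoGaussian d
        (fun i => √α' * x₀ i + √(1 - α' - σ ^ 2) * (xt i - √α * x₀ i) / √(1 - α))
        (σ ^ 2).toNNReal)
      = isoGaussian d (fun i => √α' * x₀ i) (1 - α').toNNReal := by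
  have h1α : 0 < 1 - α := by linarith
  have h1α' : 0 ≤ 1 - α' := by linarith [sq_nonneg σ]
  set a := √(1 - α' - σ ^ 2) / √(1 - α)
  have hker : (fun xt : Fin d → ℝ => isoGaussian d
        (fun i => √α' * x₀ i + √(1 - α' - σ ^ 2) * (xt i - √α * x₀ i) / √(1 - α))
        (σ ^ 2).toNNReal)
      = fun xt => isoGaussian d (a • xt + (√α' - a * √α) • x₀) (σ ^ 2).toNNReal := by
    funext xt
    congr 1
    funext i
    simp only [Pi.add_apply, Pi.smul_apply, smul_eq_mul, a]
    ring
  have ha : a ^ 2 * (1 - α) = 1 - α' - σ ^ 2 := by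
    rw [div_pow, sq_sqrt (by linarith), sq_sqrt h1α.le, div_mul_cancel₀ _ h1α.ne']
  rw [hker, show (fun i => √α * x₀ i) = √α • x₀ from rfl, isoGaussian_bind_affine]
  congr 1
  · funext i
    simp only [Pi.add_apply, Pi.smul_apply, smul_eq_mul]
    ring
  · ext
    simp only [NNReal.coe_add, NNReal.coe_mul, NNReal.coe_mk, coe_toNNReal _ h1α.le,
      coe_toNNReal _ (sq_nonneg σ), coe_toNNReal _ h1α']
    linarith

theorem ddim_marginal_consistency_general
    (d T : ℕ) (x₀ : Fin d → ℝ)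
    (α : ℕ → ℝ) (σ : ℕ → ℝ)
    (hα0 : α 0 = 1)
    (hαlt : ∀ s t, s < t → t ≤ T → α t < α s)
    (hσle : ∀ t, 1 ≤ t → t ≤ T → σ t ^ 2 ≤ 1 - α (t - 1))
    (q : ℕ → Measure (Fin d → ℝ))
    (hqT : q T = isoGaussian d (fun i => Real.sqrt (α T) * x₀ i) (1 - α T).toNNReal)
    (hrec : ∀ t, 1 ≤ t → t ≤ T →
        q (t - 1) = (q t).bind (fun xt => isoGaussian d
            (fun i => Real.sqrt (α (t - 1)) * x₀ i
              + Real.sqrt (1 - α (t - 1) - σ t ^ 2)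
                * (xt i - Real.sqrt (α t) * x₀ i) / Real.sqrt (1 - α t))
            ((σ t ^ 2).toNNReal))) :
    ∀ t, 1 ≤ t → t ≤ T →
      q t = isoGaussian d (fun i => Real.sqrt (α t) * x₀ i) (1 - α t).toNNReal := by
  intro t _ htT
  induction htT using Nat.decreasingInduction with
  | self => exact hqT
  | of_succ t htT ih =>
    have hα : α (t + 1) < 1 := hα0 ▸ hαlt 0 (t + 1) t.succ_pos htT
    have hσ : σ (t + 1) ^ 2 ≤ 1 - α t := hσle (t + 1) t.succ_pos htT
    rw [show q t = _ from hrec (t + 1) t.succ_pos htT, ih t.succ_pos]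
    exact isoGaussian_bind_ddimPosterior d x₀ hα hσ

theorem ddim_marginal_consistency
    (d T : ℕ) (hT : 1 ≤ T) (x₀ : Fin d → ℝ)
    (α : ℕ → ℝ) (σ : ℕ → ℝ)
    (hα0 : α 0 = 1)
    (hαpos : ∀ t, t ≤ T → 0 < α t)
    (hαanti : ∀ s t, s ≤ t → t ≤ T → α t ≤ α s)
    (hαlt : ∀ s t, s < t → t ≤ T → α t < α s)
    (hσnonneg : ∀ t, 1 ≤ t → t ≤ T → 0 ≤ σ t)
    (hσle : ∀ t, 1 ≤ t → t ≤ T → σ t ^ 2 ≤ 1 - α (t - 1))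
    (q : ℕ → Measure (Fin d → ℝ))
    (hqT : q T = isoGaussian d (fun i => Real.sqrt (α T) * x₀ i) (1 - α T).toNNReal)
    (hrec : ∀ t, 1 ≤ t → t ≤ T →
        q (t - 1) = (q t).bind (fun xt => isoGaussian d
            (fun i => Real.sqrt (α (t - 1)) * x₀ i
              + Real.sqrt (1 - α (t - 1) - σ t ^ 2)
                * (xt i - Real.sqrt (α t) * x₀ i) / Real.sqrt (1 - α t))
            ((σ t ^ 2).toNNReal))) :
    ∀ t, 1 ≤ t → t ≤ T →
      q t = isoGaussian d (fun i => Real.sqrt (α t) * x₀ i) (1 - α t).toNNReal :=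
  ddim_marginal_consistency_general d T x₀ α σ hα0 hαlt hσle q hqT hrec
end

section
/- With σ_t = √((1 − α_{t-1})/(1 − α_t)) · √(1 − α_t/α_{t-1}) for 0 < α_t < α_{t-1} ≤ 1, the DDIM posterior mean √(α_{t-1}) x₀ + √(1 − α_{t-1} − σ_t²) · (x_t − √(α_t) x₀)/√(1 − α_t) equals the DDPM posterior mean (√(α_t/α_{t-1})(1 − α_{t-1}) x_t + √(α_{t-1})(1 − α_t/α_{t-1}) x₀)/(1 − α_t), for all x₀, x_t ∈ ℝ^d. -/
/-!
With `σ² = (1 - αₜ₋₁)/(1 - αₜ) · (1 - αₜ/αₜ₋₁)` one finds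
`1 - αₜ₋₁ - σ² = (αₜ/αₜ₋₁)(1 - αₜ₋₁)²/(1 - αₜ)`, a perfect square since `αₜ₋₁ ≤ 1`. Hence the
DDIM coefficient of `xₜ - √αₜ x₀` is exactly the DDPM coefficient `√(αₜ/αₜ₋₁)(1 - αₜ₋₁)/(1 - αₜ)`
of `xₜ`, and the remaining coefficients of `x₀` agree by `αₜ₋₁(1 - αₜ) - αₜ(1 - αₜ₋₁) = αₜ₋₁ - αₜ`.
-/

open Real

namespace DDIM

noncomputable def ddpmSigma (a b : ℝ) : ℝ := √((1 - a) / (1 - b)) * √(1 - b / a)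

lemma ddpmSigma_sq {a b : ℝ} (ha : 0 < a) (hba : b ≤ a) (ha1 : a ≤ 1) (hb1 : b < 1) :
    ddpmSigma a b ^ 2 = (1 - a) / (1 - b) * (1 - b / a) := by
  have hquot : 0 ≤ (1 - a) / (1 - b) := div_nonneg (by linarith) (by linarith)
  have hratio : 0 ≤ 1 - b / a := sub_nonneg.2 ((div_le_one ha).2 hba)
  rw [ddpmSigma, mul_pow, sq_sqrt hquot, sq_sqrt hratio]

lemma one_sub_sub_ddpmSigma_sq {a b : ℝ} (ha : 0 < a) (hba : b ≤ a) (ha1 : a ≤ 1) (hb1 : b < 1) :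
    1 - a - ddpmSigma a b ^ 2 = b / a * (1 - a) ^ 2 / (1 - b) := by
  have hb1' : 1 - b ≠ 0 := by linarith
  rw [ddpmSigma_sq ha hba ha1 hb1]
  field_simp
  ring

lemma sqrt_one_sub_sub_ddpmSigma_sq_div {a b : ℝ} (hb : 0 ≤ b) (hba : b < a) (ha1 : a ≤ 1) :
    √(1 - a - ddpmSigma a b ^ 2) / √(1 - b) = √(b / a) * (1 - a) / (1 - b) := by
  have ha : 0 < a := hb.trans_lt hba
  have hb1 : 0 < 1 - b := by linarith
  rw [one_sub_sub_ddpmSigma_sq ha hba.le ha1 (by linarith), mul_div_assoc,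
    sqrt_mul (div_nonneg hb ha.le), sqrt_div (sq_nonneg _), sqrt_sq (by linarith),
    mul_div_assoc, mul_div_assoc, div_div, mul_self_sqrt hb1.le]

lemma sqrt_sub_sqrt_div_mul_sqrt {a b : ℝ} (ha : 0 < a) (hb : 0 ≤ b) (hb1 : 1 - b ≠ 0) :
    √a - √(b / a) * (1 - a) / (1 - b) * √b = √a * (1 - b / a) / (1 - b) := by
  have hsa : √a ≠ 0 := (sqrt_pos.2 ha).ne'
  rw [sqrt_div hb]
  field_simp
  rw [sq_sqrt ha.le, sq_sqrt hb]
  ring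

end DDIM

open DDIM in
theorem ddim_reduces_to_ddpm_posterior_mean {d : ℕ}
    (αprev αt : ℝ)
    (h1 : 0 < αt) (h2 : αt < αprev) (h3 : αprev ≤ 1)
    (σ : ℝ)
    (hσ : σ = Real.sqrt ((1 - αprev) / (1 - αt)) * Real.sqrt (1 - αt / αprev))
    (x₀ xt : EuclideanSpace ℝ (Fin d)) :
    Real.sqrt αprev • x₀
        + (Real.sqrt (1 - αprev - σ ^ 2) / Real.sqrt (1 - αt)) • (xt - Real.sqrt αt • x₀)
      = ((Real.sqrt (αt / αprev) * (1 - αprev)) / (1 - αt)) • xt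
        + ((Real.sqrt αprev * (1 - αt / αprev)) / (1 - αt)) • x₀ := by
  rw [show σ = ddpmSigma αprev αt from hσ, sqrt_one_sub_sub_ddpmSigma_sq_div h1.le h2 h3]
  match_scalars
  · linear_combination sqrt_sub_sqrt_div_mul_sqrt (h1.trans h2) h1.le (by linarith)
  · ring
end
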